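/- Let d ≥ 1 be an integer and let V_d := π^{d/2} / Γ(d/2 + 1) be the volume of the unit ball of ℝ^d. Then Σ_{w ∈ ℤ^d, 1/ε < |w| ≤ 2/ε} |w|^{-d} converges to d V_d ln 2 as ε → 0⁺. -/

import Mathlib

/-- The lattice point `w ∈ ℤ^d ⊂ ℝ^d` (with the Euclidean norm). -/
noncomputable def intPt (d : ℕ) (w : Fin d → ℤ) : EuclideanSpace ℝ (Fin d) :=
  (WithLp.equiv 2 (Fin d → ℝ)).symm fun i => (w i : ℝ)

/-- The volume `V_d = π^{d/2} / Γ(d/2 + 1)` of the unit ball of `ℝ^d`. -/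
noncomputable def unitBallVol (d : ℕ) : ℝ :=
  Real.pi ^ ((d : ℝ) / 2) / Real.Gamma ((d : ℝ) / 2 + 1)

/-!
The half-open unit cubes `w + [0,1)^d`, `w ∈ ℤ^d`, tile `ℝ^d`, and on the cube of `w` the norm
differs from `|w|` by at most `√d`. So for `|w| ≥ a > √d` the average of `|x|^{-d}` over that cube
is `|w|^{-d}` up to a factor between `(1 + √d/a)^{-d}` and `(1 - √d/a)^{-d}`, and the sum over the
shell `a < |w| ≤ b` is squeezed between such factors times the integrals of `|x|^{-d}` over the
annuli `a + √d < |x| ≤ b - √d` and `a - √d < |x| ≤ b + √d`. In polar coordinates the integral over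
`r < |x| ≤ R` is `d V_d log (R / r)`, so for `a = 1/ε`, `b = 2/ε` both bounds tend to `d V_d log 2`.
-/

open MeasureTheory Metric Set Filter Topology Module Real Function

section Annulus

variable {E : Type*} [NormedAddCommGroup E] [NormedSpace ℝ E] [FiniteDimensional ℝ E]
  [MeasurableSpace E] [BorelSpace E] (μ : Measure E) [μ.IsAddHaarMeasure]

theorem integrableOn_inv_norm_pow_annulus {a : ℝ} (ha : 0 < a) (b : ℝ) (n : ℕ) :
    IntegrableOn (fun x : E => (‖x‖ ^ n)⁻¹) (closedBall 0 b \ closedBall 0 a) μ := by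
  have hcont : ContinuousOn (fun x : E => (‖x‖ ^ n)⁻¹) (closedBall 0 b \ ball 0 a) := by
    refine (continuous_norm.pow n).continuousOn.inv₀ fun x hx => pow_ne_zero n ?_
    have : a ≤ ‖x‖ := by simpa using hx.2
    exact (ha.trans_le this).ne'
  exact (hcont.integrableOn_compact ((isCompact_closedBall 0 b).diff isOpen_ball)).mono_set
    (sdiff_subset_sdiff_right ball_subset_closedBall)

theorem integral_inv_norm_pow_finrank_annulus [Nontrivial E] {a b : ℝ} (ha : 0 < a) (hab : a ≤ b) :
    ∫ x in closedBall (0 : E) b \ closedBall 0 a, (‖x‖ ^ finrank ℝ E)⁻¹ ∂μ =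
      finrank ℝ E * μ.real (ball 0 1) * log (b / a) := by
  set n := finrank ℝ E
  have hshell : closedBall (0 : E) b \ closedBall 0 a = norm ⁻¹' Ioc a b := by
    ext x; simp [and_comm]
  have hradial : ∫ y in Ioi (0 : ℝ), y ^ (n - 1) • (Ioc a b).indicator (fun y => (y ^ n)⁻¹) y =
      log (b / a) := by
    calc ∫ y in Ioi (0 : ℝ), y ^ (n - 1) • (Ioc a b).indicator (fun y => (y ^ n)⁻¹) y
        = ∫ y in Ioc a b, y⁻¹ := by
          obtain ⟨k, hk⟩ : ∃ k, n = k + 1 := Nat.exists_eq_succ_of_ne_zero finrank_pos.ne'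
          have hintegrand : (fun y : ℝ => y ^ (n - 1) • (Ioc a b).indicator (fun y => (y ^ n)⁻¹) y)
              = (Ioc a b).indicator (fun y => y⁻¹) := by
            ext y
            by_cases hy : y ∈ Ioc a b
            · have hy0 : y ≠ 0 := (ha.trans hy.1).ne'
              simp only [indicator_of_mem hy, hk, Nat.add_sub_cancel, smul_eq_mul, pow_succ]
              field_simp
            · simp [indicator_of_notMem hy]
          rw [hintegrand, setIntegral_indicator measurableSet_Ioc,
            inter_eq_right.mpr (Ioc_subset_Ioi_self.trans (Ioi_subset_Ioi ha.le))]
      _ = log (b / a) := by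
          rw [← intervalIntegral.integral_of_le hab, integral_inv_of_pos ha (ha.trans_le hab)]
  have hcomp : ∀ x : E, (norm ⁻¹' Ioc a b).indicator (fun x : E => (‖x‖ ^ n)⁻¹) x =
      (Ioc a b).indicator (fun y => (y ^ n)⁻¹) ‖x‖ := fun _ => rfl
  rw [hshell, ← integral_indicator (measurableSet_Ioc.preimage measurable_norm),
    integral_congr_ae (ae_of_all _ hcomp), integral_fun_norm_addHaar μ, hradial, nsmul_eq_mul,
    smul_eq_mul]
  ring

theorem measureReal_ball_zero_one_euclideanSpace (d : ℕ) [NeZero d] :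
    volume.real (ball (0 : EuclideanSpace ℝ (Fin d)) 1) = unitBallVol d := by
  have hsqrt : √π ^ d = π ^ ((d : ℝ) / 2) := by
    rw [Real.sqrt_eq_rpow, ← Real.rpow_natCast, ← Real.rpow_mul Real.pi_pos.le]
    ring_nf
  rw [measureReal_def, EuclideanSpace.volume_ball, Fintype.card_fin, ENNReal.ofReal_one, one_pow,
    one_mul, ENNReal.toReal_ofReal (by positivity), hsqrt, unitBallVol]

theorem integral_inv_norm_pow_annulus_euclideanSpace (d : ℕ) [NeZero d] {a b : ℝ} (ha : 0 < a)
    (hab : a ≤ b) :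
    ∫ x in closedBall (0 : EuclideanSpace ℝ (Fin d)) b \ closedBall 0 a, (‖x‖ ^ d)⁻¹ =
      d * unitBallVol d * log (b / a) := by
  simpa [finrank_euclideanSpace_fin, measureReal_ball_zero_one_euclideanSpace] using
    integral_inv_norm_pow_finrank_annulus (volume : Measure (EuclideanSpace ℝ (Fin d))) ha hab

section Cubes

variable {d : ℕ}

theorem intPt_apply (w : Fin d → ℤ) (i : Fin d) : intPt d w i = w i := rfl

def unitCube (w : Fin d → ℤ) : Set (EuclideanSpace ℝ (Fin d)) :=
  {x | ∀ i, x i ∈ Ico (w i : ℝ) (w i + 1)}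

theorem unitCube_eq_preimage (w : Fin d → ℤ) :
    unitCube w = WithLp.ofLp ⁻¹' univ.pi fun i => Ico (w i : ℝ) (w i + 1) := by
  ext x
  simp [unitCube]

theorem measurableSet_unitCube (w : Fin d → ℤ) : MeasurableSet (unitCube w) := by
  rw [unitCube_eq_preimage]
  exact (MeasurableSet.univ_pi fun _ => measurableSet_Ico).preimage
    (PiLp.volume_preserving_ofLp _).measurable

theorem volume_unitCube (w : Fin d → ℤ) : volume (unitCube w) = 1 := by
  rw [unitCube_eq_preimage, (PiLp.volume_preserving_ofLp _).measure_preimage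
    (MeasurableSet.univ_pi fun _ => measurableSet_Ico).nullMeasurableSet, volume_pi_pi]
  simp

theorem measureReal_unitCube (w : Fin d → ℤ) : volume.real (unitCube w) = 1 := by
  simp [measureReal_def, volume_unitCube]

theorem pairwise_disjoint_unitCube : Pairwise (Disjoint on (unitCube (d := d))) := by
  intro w w' hne
  refine Set.disjoint_left.mpr fun x hx hx' => hne (funext fun i => ?_)
  have h := hx i
  have h' := hx' i
  have hlt : w i < w' i + 1 := by exact_mod_cast h.1.trans_lt h'.2
  have hlt' : w' i < w i + 1 := by exact_mod_cast h'.1.trans_lt h.2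
  omega

theorem mem_unitCube_floor (x : EuclideanSpace ℝ (Fin d)) : x ∈ unitCube fun i => ⌊x i⌋ :=
  fun _ => ⟨Int.floor_le _, Int.lt_floor_add_one _⟩

theorem dist_intPt_le_of_mem_unitCube {w : Fin d → ℤ} {x : EuclideanSpace ℝ (Fin d)}
    (hx : x ∈ unitCube w) : dist x (intPt d w) ≤ √d := by
  rw [EuclideanSpace.dist_eq]
  refine Real.sqrt_le_sqrt ?_
  calc ∑ i, dist (x i) (intPt d w i) ^ 2 ≤ ∑ _i : Fin d, (1 : ℝ) := by
        refine Finset.sum_le_sum fun i _ => ?_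
        rw [Real.dist_eq, intPt_apply, sq_abs]
        obtain ⟨hlo, hhi⟩ := hx i
        nlinarith
    _ = d := by simp

theorem abs_norm_sub_norm_intPt_le {w : Fin d → ℤ} {x : EuclideanSpace ℝ (Fin d)}
    (hx : x ∈ unitCube w) : |‖x‖ - ‖intPt d w‖| ≤ √d :=
  (abs_norm_sub_norm_le x _).trans (dist_eq_norm x _ ▸ dist_intPt_le_of_mem_unitCube hx)

theorem norm_mem_Icc_of_mem_unitCube {w : Fin d → ℤ} {x : EuclideanSpace ℝ (Fin d)} {a : ℝ}
    (ha : 0 < a) (hw : a ≤ ‖intPt d w‖) (hx : x ∈ unitCube w) :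
    ‖x‖ ∈ Icc ((1 - √d / a) * ‖intPt d w‖) ((1 + √d / a) * ‖intPt d w‖) := by
  have hsqrt : √d ≤ √d / a * ‖intPt d w‖ := by
    rw [div_mul_eq_mul_div, le_div_iff₀ ha]
    exact mul_le_mul_of_nonneg_left hw (Real.sqrt_nonneg _)
  have hdist := abs_le.mp (abs_norm_sub_norm_intPt_le hx)
  constructor <;> linarith [hdist.1, hdist.2]

theorem integrableOn_unitCube {w : Fin d → ℤ} (hw : √d < ‖intPt d w‖) :
    IntegrableOn (fun x : EuclideanSpace ℝ (Fin d) => (‖x‖ ^ d)⁻¹) (unitCube w) := by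
  refine (integrableOn_inv_norm_pow_annulus volume (half_pos (sub_pos.mpr hw))
    (‖intPt d w‖ + √d) d).mono_set fun x hx => ?_
  have hdist := abs_le.mp (abs_norm_sub_norm_intPt_le hx)
  simp only [Set.mem_sdiff, mem_closedBall_zero_iff, not_le]
  constructor <;> linarith [hdist.1, hdist.2]

theorem le_setIntegral_unitCube {w : Fin d → ℤ} {a : ℝ} (ha : √d < a) (hw : a ≤ ‖intPt d w‖) :
    ((1 + √d / a) ^ d)⁻¹ * (‖intPt d w‖ ^ d)⁻¹ ≤ ∫ x in unitCube w, (‖x‖ ^ d)⁻¹ := by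
  have ha0 : 0 < a := (Real.sqrt_nonneg _).trans_lt ha
  have hlow : 0 < (1 - √d / a) * ‖intPt d w‖ :=
    mul_pos (sub_pos.mpr ((div_lt_one ha0).mpr ha)) (ha0.trans_le hw)
  calc ((1 + √d / a) ^ d)⁻¹ * (‖intPt d w‖ ^ d)⁻¹
      = ((1 + √d / a) ^ d)⁻¹ * (‖intPt d w‖ ^ d)⁻¹ * volume.real (unitCube w) := by
        rw [measureReal_unitCube, mul_one]
    _ ≤ ∫ x in unitCube w, (‖x‖ ^ d)⁻¹ :=
        setIntegral_ge_of_const_le_real (measurableSet_unitCube w) (by simp [volume_unitCube])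
          (fun x hx => by
            have hx' := norm_mem_Icc_of_mem_unitCube ha0 hw hx
            rw [← mul_inv, ← mul_pow]
            exact inv_anti₀ (pow_pos (hlow.trans_le hx'.1) d)
              (pow_le_pow_left₀ (norm_nonneg _) hx'.2 d))
          (integrableOn_unitCube (ha.trans_le hw))

theorem setIntegral_unitCube_le {w : Fin d → ℤ} {a : ℝ} (ha : √d < a) (hw : a ≤ ‖intPt d w‖) :
    ∫ x in unitCube w, (‖x‖ ^ d)⁻¹ ≤ ((1 - √d / a) ^ d)⁻¹ * (‖intPt d w‖ ^ d)⁻¹ := by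
  have ha0 : 0 < a := (Real.sqrt_nonneg _).trans_lt ha
  have hlow : 0 < (1 - √d / a) * ‖intPt d w‖ :=
    mul_pos (sub_pos.mpr ((div_lt_one ha0).mpr ha)) (ha0.trans_le hw)
  calc ∫ x in unitCube w, (‖x‖ ^ d)⁻¹ ≤ ‖∫ x in unitCube w, (‖x‖ ^ d)⁻¹‖ := Real.le_norm_self _
    _ ≤ ((1 - √d / a) ^ d)⁻¹ * (‖intPt d w‖ ^ d)⁻¹ * volume.real (unitCube w) :=
        norm_setIntegral_le_of_norm_le_const (by simp [volume_unitCube]) fun x hx => by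
          have hx' := norm_mem_Icc_of_mem_unitCube ha0 hw hx
          rw [norm_inv, norm_pow, norm_norm, ← mul_inv, ← mul_pow]
          exact inv_anti₀ (pow_pos hlow d) (pow_le_pow_left₀ hlow.le hx'.1 d)
    _ = ((1 - √d / a) ^ d)⁻¹ * (‖intPt d w‖ ^ d)⁻¹ := by rw [measureReal_unitCube, mul_one]

end Cubes

section Shell

variable {d : ℕ}

theorem finite_setOf_norm_intPt_le (b : ℝ) : {w : Fin d → ℤ | ‖intPt d w‖ ≤ b}.Finite := by
  refine (finite_Icc (-fun _ => ⌈b⌉) fun _ => ⌈b⌉).subset fun w hw => ?_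
  have hcoord : ∀ i, |w i| ≤ ⌈b⌉ := fun i => (Int.cast_le (R := ℝ)).mp <| by
    have := (PiLp.norm_apply_le (intPt d w) i).trans hw
    rw [intPt_apply, Real.norm_eq_abs] at this
    push_cast
    exact this.trans (Int.le_ceil b)
  exact ⟨fun i => (abs_le.mp (hcoord i)).1, fun i => (abs_le.mp (hcoord i)).2⟩

noncomputable def latticeShell (d : ℕ) (a b : ℝ) : Finset (Fin d → ℤ) :=
  ((finite_setOf_norm_intPt_le b).subset fun _ hw => hw.2 :
    {w : Fin d → ℤ | a < ‖intPt d w‖ ∧ ‖intPt d w‖ ≤ b}.Finite).toFinset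

theorem mem_latticeShell {a b : ℝ} {w : Fin d → ℤ} :
    w ∈ latticeShell d a b ↔ a < ‖intPt d w‖ ∧ ‖intPt d w‖ ≤ b :=
  Finite.mem_toFinset _

theorem tsum_ite_eq_sum_latticeShell (a b : ℝ) (f : (Fin d → ℤ) → ℝ) :
    ∑' w, (if a < ‖intPt d w‖ ∧ ‖intPt d w‖ ≤ b then f w else 0) =
      ∑ w ∈ latticeShell d a b, f w := by
  rw [tsum_eq_sum fun w hw => if_neg (mt mem_latticeShell.mpr hw)]
  exact Finset.sum_congr rfl fun w hw => if_pos (mem_latticeShell.mp hw)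

theorem biUnion_unitCube_latticeShell_subset (a b : ℝ) :
    ⋃ w ∈ latticeShell d a b, unitCube w ⊆ closedBall 0 (b + √d) \ closedBall 0 (a - √d) := by
  simp only [iUnion_subset_iff, mem_latticeShell]
  intro w hw x hx
  have hdist := abs_le.mp (abs_norm_sub_norm_intPt_le hx)
  simp only [Set.mem_sdiff, mem_closedBall_zero_iff, not_le]
  constructor <;> linarith [hdist.1, hdist.2, hw.1, hw.2]

theorem subset_biUnion_unitCube_latticeShell (a b : ℝ) :
    closedBall 0 (b - √d) \ closedBall 0 (a + √d) ⊆ ⋃ w ∈ latticeShell d a b, unitCube w := by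
  intro x hx
  simp only [Set.mem_sdiff, mem_closedBall_zero_iff, not_le] at hx
  have hfloor := mem_unitCube_floor x
  have hdist := abs_le.mp (abs_norm_sub_norm_intPt_le hfloor)
  refine mem_biUnion (mem_latticeShell.mpr ⟨?_, ?_⟩) hfloor <;>
    linarith [hdist.1, hdist.2, hx.1, hx.2]

theorem integrableOn_biUnion_unitCube_latticeShell {a : ℝ} (ha : √d < a) (b : ℝ) :
    IntegrableOn (fun x : EuclideanSpace ℝ (Fin d) => (‖x‖ ^ d)⁻¹)
      (⋃ w ∈ latticeShell d a b, unitCube w) :=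
  (integrableOn_inv_norm_pow_annulus volume (sub_pos.mpr ha) _ d).mono_set
    (biUnion_unitCube_latticeShell_subset a b)

theorem integral_biUnion_unitCube_latticeShell {a : ℝ} (ha : √d < a) (b : ℝ) :
    ∫ x in ⋃ w ∈ latticeShell d a b, unitCube w, (‖x‖ ^ d)⁻¹ =
      ∑ w ∈ latticeShell d a b, ∫ x in unitCube w, (‖x‖ ^ d)⁻¹ :=
  integral_biUnion_finset _ (fun w _ => measurableSet_unitCube w)
    (pairwise_disjoint_unitCube.set_pairwise _)
    fun _ hw => integrableOn_unitCube (ha.trans (mem_latticeShell.mp hw).1)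

theorem sum_latticeShell_le [NeZero d] {a b : ℝ} (ha : √d < a) (hab : a ≤ b) :
    ∑ w ∈ latticeShell d a b, (‖intPt d w‖ ^ d)⁻¹ ≤
      (1 + √d / a) ^ d * (d * unitBallVol d * log ((b + √d) / (a - √d))) := by
  have hc : 0 < (1 + √d / a) ^ d := by
    have ha0 : 0 < a := (Real.sqrt_nonneg _).trans_lt ha
    positivity
  calc ∑ w ∈ latticeShell d a b, (‖intPt d w‖ ^ d)⁻¹
      = (1 + √d / a) ^ d * ∑ w ∈ latticeShell d a b,
          ((1 + √d / a) ^ d)⁻¹ * (‖intPt d w‖ ^ d)⁻¹ := by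
        rw [Finset.mul_sum]
        exact Finset.sum_congr rfl fun w _ => (mul_inv_cancel_left₀ hc.ne' _).symm
    _ ≤ (1 + √d / a) ^ d * ∑ w ∈ latticeShell d a b, ∫ x in unitCube w, (‖x‖ ^ d)⁻¹ := by
        gcongr with _ hw
        exact le_setIntegral_unitCube ha (mem_latticeShell.mp hw).1.le
    _ = (1 + √d / a) ^ d * ∫ x in ⋃ w ∈ latticeShell d a b, unitCube w, (‖x‖ ^ d)⁻¹ := by
        rw [integral_biUnion_unitCube_latticeShell ha]
    _ ≤ (1 + √d / a) ^ d *
          ∫ x in closedBall (0 : EuclideanSpace ℝ (Fin d)) (b + √d) \ closedBall 0 (a - √d),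
            (‖x‖ ^ d)⁻¹ := by
        refine mul_le_mul_of_nonneg_left (setIntegral_mono_set
          (integrableOn_inv_norm_pow_annulus volume (sub_pos.mpr ha) _ d)
          (ae_of_all _ fun x => by positivity)
          (biUnion_unitCube_latticeShell_subset a b).eventuallyLE) hc.le
    _ = _ := by
        rw [integral_inv_norm_pow_annulus_euclideanSpace d (sub_pos.mpr ha)
          (by linarith [Real.sqrt_nonneg d])]

theorem le_sum_latticeShell [NeZero d] {a b : ℝ} (ha : √d < a) (hab : a + 2 * √d ≤ b) :
    (1 - √d / a) ^ d * (d * unitBallVol d * log ((b - √d) / (a + √d))) ≤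
      ∑ w ∈ latticeShell d a b, (‖intPt d w‖ ^ d)⁻¹ := by
  have ha0 : 0 < a := (Real.sqrt_nonneg _).trans_lt ha
  have hc : 0 < (1 - √d / a) ^ d := pow_pos (sub_pos.mpr ((div_lt_one ha0).mpr ha)) d
  calc (1 - √d / a) ^ d * (d * unitBallVol d * log ((b - √d) / (a + √d)))
      = (1 - √d / a) ^ d *
          ∫ x in closedBall (0 : EuclideanSpace ℝ (Fin d)) (b - √d) \ closedBall 0 (a + √d),
            (‖x‖ ^ d)⁻¹ := by
        rw [integral_inv_norm_pow_annulus_euclideanSpace d (by positivity) (by linarith)]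
    _ ≤ (1 - √d / a) ^ d * ∫ x in ⋃ w ∈ latticeShell d a b, unitCube w, (‖x‖ ^ d)⁻¹ := by
        refine mul_le_mul_of_nonneg_left (setIntegral_mono_set
          (integrableOn_biUnion_unitCube_latticeShell ha b)
          (ae_of_all _ fun x => by positivity)
          (subset_biUnion_unitCube_latticeShell a b).eventuallyLE) hc.le
    _ = (1 - √d / a) ^ d * ∑ w ∈ latticeShell d a b, ∫ x in unitCube w, (‖x‖ ^ d)⁻¹ := by
        rw [integral_biUnion_unitCube_latticeShell ha]
    _ ≤ (1 - √d / a) ^ d * ∑ w ∈ latticeShell d a b,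
          ((1 - √d / a) ^ d)⁻¹ * (‖intPt d w‖ ^ d)⁻¹ := by
        gcongr with w hw
        exact setIntegral_unitCube_le ha (mem_latticeShell.mp hw).1.le
    _ = ∑ w ∈ latticeShell d a b, (‖intPt d w‖ ^ d)⁻¹ := by
        rw [Finset.mul_sum]
        exact Finset.sum_congr rfl fun w _ => mul_inv_cancel_left₀ hc.ne' _

end Shell

section Limit

/-- `shellBound d (-√d) ε` and `shellBound d √d ε` are the bounds of `le_sum_latticeShell` and
`sum_latticeShell_le` for the shell `1/ε < |w| ≤ 2/ε`, rewritten to be continuous at `ε = 0`. -/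
noncomputable def shellBound (d : ℕ) (c ε : ℝ) : ℝ :=
  (1 + c * ε) ^ d * (d * unitBallVol d * log ((2 + c * ε) / (1 - c * ε)))

theorem tendsto_shellBound (d : ℕ) (c : ℝ) :
    Tendsto (shellBound d c) (𝓝 0) (𝓝 (d * unitBallVol d * log 2)) := by
  have hcont : ContinuousAt (shellBound d c) 0 := by
    unfold shellBound
    fun_prop (disch := norm_num)
  simpa [shellBound] using hcont.tendsto

variable {d : ℕ} [NeZero d] {ε : ℝ}

theorem shellBound_neg_le_sum_latticeShell (hε : 0 < ε) (hεd : 2 * √d * ε ≤ 1) :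
    shellBound d (-√d) ε ≤ ∑ w ∈ latticeShell d (1 / ε) (2 / ε), (‖intPt d w‖ ^ d)⁻¹ := by
  have hbound := le_sum_latticeShell (d := d) (a := 1 / ε) (b := 2 / ε)
    (by rw [lt_div_iff₀ hε]; nlinarith [Real.sqrt_nonneg d])
    (by rw [div_add' _ _ _ hε.ne', div_le_div_iff_of_pos_right hε]; linarith)
  have hratio : (2 / ε - √d) / (1 / ε + √d) = (2 - √d * ε) / (1 + √d * ε) := by
    rw [← div_div_div_cancel_right₀ hε.ne' (2 - √d * ε)]
    congr 1 <;> field_simp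
  rw [hratio, div_div_eq_mul_div, div_one] at hbound
  simpa [shellBound, ← sub_eq_add_neg] using hbound

theorem sum_latticeShell_le_shellBound (hε : 0 < ε) (hεd : 2 * √d * ε ≤ 1) :
    ∑ w ∈ latticeShell d (1 / ε) (2 / ε), (‖intPt d w‖ ^ d)⁻¹ ≤ shellBound d √d ε := by
  have hbound := sum_latticeShell_le (d := d) (a := 1 / ε) (b := 2 / ε)
    (by rw [lt_div_iff₀ hε]; nlinarith [Real.sqrt_nonneg d])
    (div_le_div_of_nonneg_right (by norm_num) hε.le)
  have hratio : (2 / ε + √d) / (1 / ε - √d) = (2 + √d * ε) / (1 - √d * ε) := by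
    rw [← div_div_div_cancel_right₀ hε.ne' (2 + √d * ε)]
    congr 1 <;> field_simp
  rwa [hratio, div_div_eq_mul_div, div_one] at hbound

end Limit

open scoped Classical in
/-- for `d ≥ 1`, `Σ_{w ∈ ℤ^d, 1/ε < |w| ≤ 2/ε} |w|^{-d} → d V_d ln 2`
as `ε → 0⁺`. -/
theorem lattice_shell_limit (d : ℕ) (hd : 1 ≤ d) :
    Filter.Tendsto
      (fun ε : ℝ => ∑' w : Fin d → ℤ,
        (if 1 / ε < ‖intPt d w‖ ∧ ‖intPt d w‖ ≤ 2 / ε then (‖intPt d w‖ ^ d)⁻¹ else 0))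
      (nhdsWithin 0 (Set.Ioi 0))
      (nhds (d * unitBallVol d * Real.log 2)) := by
  have : NeZero d := ⟨by omega⟩
  have hsmall : ∀ᶠ ε in 𝓝[>] 0, 0 < ε ∧ 2 * √d * ε ≤ 1 := by
    have h : ∀ᶠ ε in 𝓝 (0 : ℝ), 2 * √d * ε < 1 :=
      (Continuous.tendsto' (by fun_prop) 0 0 (by simp)).eventually_lt_const one_pos
    filter_upwards [self_mem_nhdsWithin, nhdsWithin_le_nhds h] with ε hε hεd
    exact ⟨hε, hεd.le⟩
  refine tendsto_of_tendsto_of_tendsto_of_le_of_le'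
    ((tendsto_shellBound d (-√d)).mono_left nhdsWithin_le_nhds)
    ((tendsto_shellBound d √d).mono_left nhdsWithin_le_nhds) ?_ ?_ <;>
  filter_upwards [hsmall] with ε ⟨hε, hεd⟩ <;>
  rw [tsum_ite_eq_sum_latticeShell]
  exacts [shellBound_neg_le_sum_latticeShell hε hεd, sum_latticeShell_le_shellBound hε hεd]
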